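/- Let A: ℂⁿ → ℂⁿ be a linear endomorphism preserving the hyperplane H = {u = 0}, and suppose there are constants C > 0, β ∈ (0,1) such that for all τ ∈ ℂ and all z with |z| = 1, C⁻¹ exp(Re τ) ≤ [exp(τA)z] ≤ C exp(Re τ), where [(u,v)] = (|u|^{2β} + |v|²)^{1/2}. Then the restriction A₀ of A to H is the identity. In particular, every eigenvalue of A₀ equals 1, and if A₀ = 1 + N with N nilpotent and N ≠ 0, then choosing v with N^k v ≠ 0 and N^{k+1} = 0, the growth of exp(τA₀)v = exp(τ)(v + τNv + … + τ^k N^k v/k!) violates the upper bound for large Re τ = 0, |τ| → ∞. -/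

import Mathlib

open Set

noncomputable def coneNorm (k : ℕ) (β : ℝ) (z : ℂ × EuclideanSpace ℂ (Fin k)) : ℝ :=
  Real.sqrt (‖z.1‖ ^ (2 * β) + ‖z.2‖ ^ 2)

/-!
On the hyperplane `{u = 0}` the cone norm is the Euclidean norm, and the flow `exp(τA)` preserves
the hyperplane. So for a unit vector `v` there, `e^{-τ} exp(τA) v` is an entire function of `τ`
bounded by `C`; by Liouville it is constant, i.e. `exp(τA) v = e^τ v`, and differentiating at
`τ = 0` gives `A v = v`.
-/

open NormedSpace

section Exponential

variable {𝕂 E : Type*} [RCLike 𝕂] [NormedAddCommGroup E] [NormedSpace 𝕂 E] [CompleteSpace E]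

theorem NormedSpace.exp_apply_mem_of_mapsTo {p : Submodule 𝕂 E} (hp : IsClosed (p : Set E))
    {T : E →L[𝕂] E} (hT : MapsTo T p p) {v : E} (hv : v ∈ p) : exp T v ∈ p := by
  have hsum : HasSum (fun n : ℕ => (n.factorial⁻¹ : 𝕂) • (T ^ n) v) (exp T v) :=
    (exp_series_hasSum_exp' (𝕂 := 𝕂) T).mapL (ContinuousLinearMap.apply 𝕂 E v)
  rw [← hsum.tsum_eq]
  refine tsum_mem hp fun n => p.smul_mem _ ?_
  rw [FunLike.coe_pow_eq_iterate]
  exact hT.iterate n hv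

end Exponential

section Liouville

variable {E : Type*} [NormedAddCommGroup E] [NormedSpace ℂ E] [CompleteSpace E]

theorem exp_smul_apply_eq_of_norm_le {T : E →L[ℂ] E} {v : E} {C : ℝ}
    (hle : ∀ τ : ℂ, ‖exp (τ • T) v‖ ≤ C * Real.exp τ.re) (τ : ℂ) :
    exp (τ • T) v = Complex.exp τ • v := by
  set f : ℂ → E := fun τ => Complex.exp (-τ) • exp (τ • T) v
  have hf : Differentiable ℂ f := fun τ =>
    (Complex.differentiable_exp.comp differentiable_neg τ).smul
      ((hasDerivAt_exp_smul_const T τ).differentiableAt.clm_apply (differentiableAt_const v))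
  have hbdd : Bornology.IsBounded (range f) := by
    refine (Metric.isBounded_iff_subset_closedBall 0).2 ⟨C, ?_⟩
    rintro - ⟨τ, rfl⟩
    rw [mem_closedBall_zero_iff]
    calc ‖f τ‖ = Real.exp (-τ.re) * ‖exp (τ • T) v‖ := by
          simp only [f, norm_smul, Complex.norm_exp, Complex.neg_re]
      _ ≤ Real.exp (-τ.re) * (C * Real.exp τ.re) := by gcongr; exact hle τ
      _ = C := by rw [mul_left_comm, ← Real.exp_add, neg_add_cancel, Real.exp_zero, mul_one]
  have hconst : f τ = v := by simpa [f] using hf.apply_eq_apply_of_bounded hbdd τ 0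
  calc exp (τ • T) v = Complex.exp τ • f τ := by
        simp only [f, smul_smul, ← Complex.exp_add, add_neg_cancel, Complex.exp_zero, one_smul]
    _ = Complex.exp τ • v := by rw [hconst]

theorem apply_eq_self_of_exp_smul_apply_eq {T : E →L[ℂ] E} {v : E}
    (hexp : ∀ τ : ℂ, exp (τ • T) v = Complex.exp τ • v) : T v = v := by
  have hflow : HasDerivAt (fun τ : ℂ => exp (τ • T) v) (T v) 0 := by
    simpa using (hasDerivAt_exp_smul_const T (0 : ℂ)).clm_apply (hasDerivAt_const 0 v)
  have hexp' : HasDerivAt (fun τ : ℂ => Complex.exp τ • v) v 0 := by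
    simpa using (Complex.hasDerivAt_exp 0).smul_const v
  exact hflow.unique (by simpa only [hexp] using hexp')

end Liouville

theorem coneNorm_of_fst_eq_zero {k : ℕ} {β : ℝ} (hβ : 0 < β) {z : ℂ × EuclideanSpace ℂ (Fin k)}
    (hz : z.1 = 0) : coneNorm k β z = ‖z‖ := by
  rw [coneNorm, hz, norm_zero, Real.zero_rpow (by positivity), zero_add,
    Real.sqrt_sq (norm_nonneg _), Prod.norm_def, hz, norm_zero, max_eq_right (norm_nonneg _)]

theorem stmt15_general (k : ℕ) (β C : ℝ) (hβ : β ∈ Set.Ioo (0 : ℝ) 1)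
    (A : (ℂ × EuclideanSpace ℂ (Fin k)) →L[ℂ] (ℂ × EuclideanSpace ℂ (Fin k)))
    (hH : ∀ z : ℂ × EuclideanSpace ℂ (Fin k), z.1 = 0 → (A z).1 = 0)
    (hest : ∀ τ : ℂ, ∀ z : ℂ × EuclideanSpace ℂ (Fin k), ‖z‖ = 1 →
      C⁻¹ * Real.exp τ.re ≤ coneNorm k β ((NormedSpace.exp (τ • A)) z) ∧
      coneNorm k β ((NormedSpace.exp (τ • A)) z) ≤ C * Real.exp τ.re) :
    ∀ z : ℂ × EuclideanSpace ℂ (Fin k), z.1 = 0 → A z = z := by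
  intro z hz
  obtain rfl | hz0 := eq_or_ne z 0
  · exact map_zero A
  set H := LinearMap.ker (LinearMap.fst ℂ ℂ (EuclideanSpace ℂ (Fin k)))
  have hHclosed : IsClosed (H : Set (ℂ × EuclideanSpace ℂ (Fin k))) :=
    (ContinuousLinearMap.fst ℂ ℂ _).isClosed_ker
  have hAH : MapsTo A H H := fun x hx => hH x hx
  set u := (‖z‖ : ℂ)⁻¹ • z
  have hu : u ∈ H := by simp [H, u, hz]
  have hun : ‖u‖ = 1 := norm_smul_inv_norm hz0
  have hAu : A u = u := apply_eq_self_of_exp_smul_apply_eq <| exp_smul_apply_eq_of_norm_le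
    fun τ => by
      have hflow : exp (τ • A) u ∈ H :=
        exp_apply_mem_of_mapsTo (𝕂 := ℂ) hHclosed (fun x hx => H.smul_mem τ (hAH hx)) hu
      rw [← coneNorm_of_fst_eq_zero hβ.1 hflow]
      exact (hest τ u hun).2
  have hzu : z = (‖z‖ : ℂ) • u := by simp [u, smul_smul, hz0]
  rw [hzu, map_smul, hAu]

/-- If a linear endomorphism `A` of `ℂⁿ` preserves `{u = 0}` and the flows
`exp(τA)` satisfy the two-sided cone-distance growth estimate, then `A` restricts to
the identity on the hyperplane `{u = 0}`. -/
theorem stmt15 (k : ℕ) (β C : ℝ) (hβ : β ∈ Set.Ioo (0 : ℝ) 1) (hC : 0 < C)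
    (A : (ℂ × EuclideanSpace ℂ (Fin k)) →L[ℂ] (ℂ × EuclideanSpace ℂ (Fin k)))
    (hH : ∀ z : ℂ × EuclideanSpace ℂ (Fin k), z.1 = 0 → (A z).1 = 0)
    (hest : ∀ τ : ℂ, ∀ z : ℂ × EuclideanSpace ℂ (Fin k), ‖z‖ = 1 →
      C⁻¹ * Real.exp τ.re ≤ coneNorm k β ((NormedSpace.exp (τ • A)) z) ∧
      coneNorm k β ((NormedSpace.exp (τ • A)) z) ≤ C * Real.exp τ.re) :
    ∀ z : ℂ × EuclideanSpace ℂ (Fin k), z.1 = 0 → A z = z :=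
  stmt15_general k β C hβ A hH hest
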